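/- Let Q be any real polynomial and let σ < τ be real numbers. Define r(x) = (1/(2π)) · ∫_σ^τ D(x,t) · √((t−σ)(τ−t)) dt + (1/2)·((σ+τ)/2 − x)·Q'(x) + 1. Then (1/π) · ∫_σ^τ r(x)/√((x−σ)(τ−x)) dx = 1; that is, the measure with density h(x) = (1/π)·r(x)/√((x−σ)(τ−x)) on [σ,τ] has total mass 1. -/

import Mathlib

open MeasureTheory intervalIntegral

/-- The divided difference `D(x,t) = (Q'(x) − Q'(t))/(x − t)` for `t ≠ x`, `D(x,x) = Q''(x)`. -/
noncomputable def divDiff (Q : Polynomial ℝ) (x t : ℝ) : ℝ :=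
  if x = t then Q.derivative.derivative.eval x
  else (Q.derivative.eval x - Q.derivative.eval t) / (x - t)

/-- `r(x) = (1/(2π)) ∫_σ^τ D(x,t)·√((t−σ)(τ−t)) dt + (1/2)·((σ+τ)/2 − x)·Q'(x) + 1`. -/
noncomputable def rFun (Q : Polynomial ℝ) (σ τ x : ℝ) : ℝ :=
  (1 / (2 * Real.pi)) * (∫ t in σ..τ, divDiff Q x t * Real.sqrt ((t - σ) * (τ - t)))
    + (1 / 2) * ((σ + τ) / 2 - x) * Q.derivative.eval x + 1


/-!
Put `w(x) = √((x - σ)(τ - x))`, `c = (σ + τ) / 2`, `μₙ = ∫ xⁿ / w` and `νₙ = ∫ xⁿ w`. The arcsine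
substitution gives `μ₀ = π`, so the claim is that the rest of `r` integrates to zero against
`dx / w`. Since `w' = (c - x) / w`, integration by parts turns the term `½ (c - x) Q'(x)` into
`-½ ∫ Q'' w`, and it remains to show `∫∫ D(x, t) w(t) / w(x) dt dx = π ∫ Q'' w`. Expanding the
divided difference of `Q'` in monomials, this amounts to `∑_{i+j=n} μᵢ νⱼ = (n + 1) π νₙ`.

For the generating functions `M = ∑ μₙ zⁿ`, `N = ∑ νₙ zⁿ` and `q = 1 - 2cz + στz²`, the identity
`w² = (x - σ)(τ - x)` gives `z² N = μ₀ (1 - cz) - q M`, and integration by parts gives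
`z² (zN)' = (1 - cz) M - μ₀`. Differentiating the first relation and comparing with the second
yields `q M' = (c - στz) M`, hence `(q M²)' = 0` and `q M² = μ₀²`; substituting back gives
`M N = μ₀ (zN)'`, whose coefficients are the required identity.
-/

open Finset Real Set

noncomputable def semicircle (σ τ x : ℝ) : ℝ := √((x - σ) * (τ - x))

section Semicircle

variable {σ τ : ℝ}

@[fun_prop] lemma continuous_semicircle : Continuous (semicircle σ τ) := by
  unfold semicircle
  fun_prop

@[simp] lemma semicircle_left : semicircle σ τ σ = 0 := by simp [semicircle]

@[simp] lemma semicircle_right : semicircle σ τ τ = 0 := by simp [semicircle]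

lemma semicircle_pos {x : ℝ} (hx : x ∈ Ioo σ τ) : 0 < semicircle σ τ x :=
  Real.sqrt_pos.2 (mul_pos (sub_pos.2 hx.1) (sub_pos.2 hx.2))

lemma semicircle_sq {x : ℝ} (hx : x ∈ Icc σ τ) :
    semicircle σ τ x ^ 2 = (x - σ) * (τ - x) :=
  Real.sq_sqrt (mul_nonneg (sub_nonneg.2 hx.1) (sub_nonneg.2 hx.2))

lemma hasDerivAt_semicircle {x : ℝ} (hx : x ∈ Ioo σ τ) :
    HasDerivAt (semicircle σ τ) (((σ + τ) / 2 - x) / semicircle σ τ x) x := by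
  have hw := (semicircle_pos hx).ne'
  have hg : HasDerivAt (fun y => (y - σ) * (τ - y)) (σ + τ - 2 * x) x := by
    refine (((hasDerivAt_id' x).sub_const σ).mul ((hasDerivAt_id' x).const_sub τ)).congr_deriv ?_
    ring
  refine (hg.sqrt fun h => hw (by simp [semicircle, h])).congr_deriv ?_
  unfold semicircle at hw ⊢
  field_simp

lemma hasDerivAt_arcsin_semicircle {x : ℝ} (hx : x ∈ Ioo σ τ) :
    HasDerivAt (fun y => arcsin ((2 * y - σ - τ) / (τ - σ))) (1 / semicircle σ τ x) x := by
  have hστ : 0 < τ - σ := by linarith [hx.1, hx.2]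
  set u := (2 * x - σ - τ) / (τ - σ)
  have hu : 1 - u ^ 2 = (2 / (τ - σ)) ^ 2 * ((x - σ) * (τ - x)) := by
    simp only [u]
    field_simp
    ring
  have hsqrt : √(1 - u ^ 2) = 2 / (τ - σ) * semicircle σ τ x := by
    rw [hu, Real.sqrt_mul (by positivity), Real.sqrt_sq (by positivity), semicircle]
  have hu_lt : u < 1 := by rw [div_lt_one hστ]; linarith [hx.2]
  have hu_gt : -1 < u := by rw [lt_div_iff₀ hστ]; linarith [hx.1]
  have hlin : HasDerivAt (fun y => (2 * y - σ - τ) / (τ - σ)) (2 / (τ - σ)) x := by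
    simpa using (((hasDerivAt_id x).const_mul 2).sub_const σ |>.sub_const τ).div_const (τ - σ)
  refine ((Real.hasDerivAt_arcsin hu_gt.ne' hu_lt.ne).comp x hlin).congr_deriv ?_
  rw [hsqrt]
  have := (semicircle_pos hx).ne'
  field_simp

lemma continuousOn_arcsin_semicircle :
    ContinuousOn (fun y => arcsin ((2 * y - σ - τ) / (τ - σ))) (Icc σ τ) :=
  (continuous_arcsin.comp (by fun_prop)).continuousOn

lemma intervalIntegrable_inv_semicircle (hστ : σ < τ) :
    IntervalIntegrable (fun x => 1 / semicircle σ τ x) volume σ τ :=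
  (intervalIntegrable_iff_integrableOn_Ioc_of_le hστ.le).2 <|
    integrableOn_deriv_of_nonneg continuousOn_arcsin_semicircle
      (fun _ hx => hasDerivAt_arcsin_semicircle hx)
      fun _ hx => (one_div_pos.2 (semicircle_pos hx)).le

lemma integral_inv_semicircle (hστ : σ < τ) : ∫ x in σ..τ, 1 / semicircle σ τ x = π := by
  rw [integral_eq_sub_of_hasDerivAt_of_le hστ.le continuousOn_arcsin_semicircle
    (fun _ hx => hasDerivAt_arcsin_semicircle hx) (intervalIntegrable_inv_semicircle hστ)]
  have hστ' : τ - σ ≠ 0 := by linarith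
  rw [show (2 * τ - σ - τ) / (τ - σ) = 1 by field_simp; ring,
    show (2 * σ - σ - τ) / (τ - σ) = -1 by field_simp; ring, arcsin_one, arcsin_neg_one]
  ring

lemma intervalIntegrable_div_semicircle (hστ : σ < τ) {f : ℝ → ℝ} (hf : Continuous f) :
    IntervalIntegrable (fun x => f x / semicircle σ τ x) volume σ τ := by
  simpa only [mul_one_div] using
    (intervalIntegrable_inv_semicircle hστ).continuousOn_mul hf.continuousOn

lemma integral_deriv_mul_semicircle (hστ : σ < τ) {f f' : ℝ → ℝ}
    (hf : ∀ x, HasDerivAt f (f' x) x) (hf' : Continuous f') :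
    ∫ x in σ..τ, f' x * semicircle σ τ x =
      ∫ x in σ..τ, f x * (x - (σ + τ) / 2) / semicircle σ τ x := by
  have hfc : Continuous f := continuous_iff_continuousAt.2 fun x => (hf x).continuousAt
  have hint₁ : IntervalIntegrable (fun x => f' x * semicircle σ τ x) volume σ τ :=
    (hf'.mul continuous_semicircle).intervalIntegrable σ τ
  have hint₂ := intervalIntegrable_div_semicircle hστ (f := fun x => f x * (x - (σ + τ) / 2))
    (by fun_prop)
  have hftc := integral_eq_sub_of_hasDerivAt_of_le hστ.le
    (hfc.mul continuous_semicircle).continuousOn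
    (fun x hx => ((hf x).mul (hasDerivAt_semicircle hx)).congr_deriv (by ring))
    (hint₁.sub hint₂)
  rw [intervalIntegral.integral_sub hint₁ hint₂] at hftc
  simpa [sub_eq_zero] using hftc

end Semicircle

noncomputable def arcsineMoment (σ τ : ℝ) (n : ℕ) : ℝ :=
  ∫ x in σ..τ, x ^ n / semicircle σ τ x

noncomputable def semicircleMoment (σ τ : ℝ) (n : ℕ) : ℝ :=
  ∫ x in σ..τ, x ^ n * semicircle σ τ x

section Moments

variable {σ τ : ℝ}

lemma intervalIntegrable_pow_div_semicircle (hστ : σ < τ) (n : ℕ) :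
    IntervalIntegrable (fun x => x ^ n / semicircle σ τ x) volume σ τ :=
  intervalIntegrable_div_semicircle hστ (continuous_pow n)

lemma arcsineMoment_zero (hστ : σ < τ) : arcsineMoment σ τ 0 = π := by
  simpa [arcsineMoment] using integral_inv_semicircle hστ

lemma arcsineMoment_succ_sub (hστ : σ < τ) (m : ℕ) :
    arcsineMoment σ τ (m + 1) - (σ + τ) / 2 * arcsineMoment σ τ m =
      ∫ x in σ..τ, m * x ^ (m - 1) * semicircle σ τ x :=
  calc _ = ∫ x in σ..τ, x ^ (m + 1) / semicircle σ τ x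
          - (σ + τ) / 2 * (x ^ m / semicircle σ τ x) := by
        rw [intervalIntegral.integral_sub (intervalIntegrable_pow_div_semicircle hστ _)
          ((intervalIntegrable_pow_div_semicircle hστ _).const_mul _),
          intervalIntegral.integral_const_mul]
        rfl
    _ = ∫ x in σ..τ, x ^ m * (x - (σ + τ) / 2) / semicircle σ τ x :=
        integral_congr fun x _ => by ring
    _ = _ := (integral_deriv_mul_semicircle hστ (fun x => hasDerivAt_pow m x) (by fun_prop)).symm

lemma arcsineMoment_one (hστ : σ < τ) :
    arcsineMoment σ τ 1 = (σ + τ) / 2 * arcsineMoment σ τ 0 := by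
  have h := arcsineMoment_succ_sub hστ 0
  simp only [CharP.cast_eq_zero, zero_mul, intervalIntegral.integral_zero] at h
  linarith

lemma succ_mul_semicircleMoment (hστ : σ < τ) (n : ℕ) :
    ((n : ℝ) + 1) * semicircleMoment σ τ n =
      arcsineMoment σ τ (n + 2) - (σ + τ) / 2 * arcsineMoment σ τ (n + 1) := by
  rw [arcsineMoment_succ_sub hστ, semicircleMoment, ← intervalIntegral.integral_const_mul]
  refine integral_congr fun x _ => ?_
  simp only [Nat.add_sub_cancel, Nat.cast_add, Nat.cast_one]
  ring

lemma semicircleMoment_eq (hστ : σ < τ) (n : ℕ) :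
    semicircleMoment σ τ n = (σ + τ) * arcsineMoment σ τ (n + 1)
      - σ * τ * arcsineMoment σ τ n - arcsineMoment σ τ (n + 2) :=
  calc _ = ∫ x in σ..τ, (σ + τ) * (x ^ (n + 1) / semicircle σ τ x)
          - σ * τ * (x ^ n / semicircle σ τ x) - x ^ (n + 2) / semicircle σ τ x := by
        refine integral_congr fun x hx => ?_
        rw [uIcc_of_le hστ.le] at hx
        by_cases hw : semicircle σ τ x = 0
        · simp [hw]
        · field_simp
          rw [semicircle_sq hx]
          ring
    _ = _ := by
        have hint := intervalIntegrable_pow_div_semicircle hστ (σ := σ) (τ := τ)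
        rw [intervalIntegral.integral_sub (((hint _).const_mul _).sub ((hint _).const_mul _))
          (hint _), intervalIntegral.integral_sub ((hint _).const_mul _) ((hint _).const_mul _),
          intervalIntegral.integral_const_mul, intervalIntegral.integral_const_mul]
        rfl

end Moments

section PowerSeries

open PowerSeries

lemma PowerSeries.derivative_quadratic {R : Type*} [CommRing R] (c p : R) :
    d⁄dX R (1 - C (2 * c) * X + C p * X ^ 2) = 2 * C p * X - 2 * C c := by
  simp only [map_add, map_sub, Derivation.leibniz, derivative_C, derivative_X, derivative_pow,
    derivative_one, smul_eq_mul]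
  rw [map_mul, map_ofNat]
  push_cast
  ring

variable {K : Type*} [Field K] [CharZero K]

lemma PowerSeries.quadratic_mul_sq_eq_of_derivative {M : K⟦X⟧} {c p : K}
    (h : (1 - C (2 * c) * X + C p * X ^ 2) * d⁄dX K M = (C c - C p * X) * M) :
    (1 - C (2 * c) * X + C p * X ^ 2) * M ^ 2 = C (constantCoeff M) ^ 2 := by
  refine derivative.ext ?_ (by simp)
  rw [Derivation.leibniz, derivative_pow, derivative_quadratic, smul_eq_mul, smul_eq_mul,
    ← map_pow, derivative_C]
  have hC2 : C (2 * c) = 2 * C c := by rw [map_mul, map_ofNat]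
  rw [hC2] at h ⊢
  linear_combination (2 * M) * h

theorem sum_antidiagonal_mul_eq_of_moment_relations {μ ν : ℕ → K} {c p : K}
    (h_one : μ 1 = c * μ 0)
    (h_succ : ∀ n : ℕ, ((n : K) + 1) * ν n = μ (n + 2) - c * μ (n + 1))
    (h_sq : ∀ n, ν n = 2 * c * μ (n + 1) - p * μ n - μ (n + 2)) (k : ℕ) :
    ∑ ij ∈ antidiagonal k, μ ij.1 * ν ij.2 = ((k : K) + 1) * μ 0 * ν k := by
  set M := mk μ
  set N := mk ν
  set R := mk fun n => ((n : K) + 1) * ν n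
  set q : K⟦X⟧ := 1 - C (2 * c) * X + C p * X ^ 2
  have hR : d⁄dX K (X * N) = R := by
    ext n
    rw [coeff_derivative, coeff_succ_X_mul]
    simp [R, N, mul_comm]
  have hN : X ^ 2 * N = C (μ 0) * (1 - C c * X) - q * M := by
    ext n
    rcases n with _ | _ | n <;>
      simp [q, M, N, pow_two, sub_mul, add_mul, mul_sub, mul_assoc, coeff_succ_X_mul, h_sq, h_one]
    <;> ring
  have hR' : X ^ 2 * R = (1 - C c * X) * M - C (μ 0) := by
    ext n
    rcases n with _ | _ | n <;>
      simp [M, R, pow_two, sub_mul, mul_assoc, coeff_succ_X_mul, h_succ, h_one]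
  have hq : d⁄dX K q = 2 * C p * X - 2 * C c := derivative_quadratic c p
  have hode : q * d⁄dX K M = (C c - C p * X) * M := by
    have h := congrArg (fun f => X * d⁄dX K f) hN
    simp only [pow_two, mul_assoc, Derivation.leibniz, hR, smul_eq_mul, derivative_X, map_sub,
      derivative_C, derivative_one, hq, mul_one, mul_zero] at h
    apply mul_left_cancel₀ (X_ne_zero (R := K))
    have hC2 : C (2 * c) = 2 * C c := by rw [map_mul, map_ofNat]
    simp only [q, hC2] at h hN ⊢
    linear_combination h - hR' - hN
  have hconst := quadratic_mul_sq_eq_of_derivative hode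
  simp only [M, constantCoeff_mk] at hconst
  have hMN : M * N = C (μ 0) * R := by
    apply mul_left_cancel₀ (pow_ne_zero 2 (X_ne_zero (R := K)))
    linear_combination M * hN - C (μ 0) * hR' - hconst
  have := congrArg (coeff k) hMN
  rw [coeff_C_mul, coeff_mul] at this
  simp only [M, N, R, coeff_mk] at this
  rw [this]
  ring

end PowerSeries

section DividedDifference

variable {R : Type*} [CommRing R]

lemma sum_antidiagonal_pow_mul_pow_mul_sub (x t : R) (n : ℕ) :
    (∑ ij ∈ antidiagonal n, x ^ ij.1 * t ^ ij.2) * (x - t) = x ^ (n + 1) - t ^ (n + 1) := by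
  rw [Finset.Nat.sum_antidiagonal_eq_sum_range_succ_mk, ← geom_sum₂_mul]
  simp

lemma Polynomial.eval_derivative_eq_sum (P : Polynomial R) (x : R) :
    P.derivative.eval x =
      ∑ n ∈ range (P.natDegree + 1), P.coeff (n + 1) * ((n + 1) * x ^ n) := by
  rw [Polynomial.eval_eq_sum_range' (n := P.natDegree + 1)
    ((Polynomial.natDegree_derivative_le P).trans_lt (by omega))]
  refine sum_congr rfl fun n _ => ?_
  rw [Polynomial.coeff_derivative]
  ring

lemma Polynomial.eval_sub_eval_eq_sum (P : Polynomial R) (x t : R) :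
    P.eval x - P.eval t = (∑ n ∈ range (P.natDegree + 1),
      P.coeff (n + 1) * ∑ ij ∈ antidiagonal n, x ^ ij.1 * t ^ ij.2) * (x - t) := by
  have hP : P.natDegree < P.natDegree + 1 + 1 := by omega
  rw [Polynomial.eval_eq_sum_range' hP x, Polynomial.eval_eq_sum_range' hP t, ← sum_sub_distrib,
    sum_range_succ', sum_mul]
  simp only [pow_zero, mul_one, sub_self, add_zero, mul_assoc,
    sum_antidiagonal_pow_mul_pow_mul_sub]
  simp only [mul_sub]

end DividedDifference

lemma divDiff_eq_sum (Q : Polynomial ℝ) (x t : ℝ) :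
    divDiff Q x t = ∑ n ∈ range (Q.derivative.natDegree + 1),
      Q.derivative.coeff (n + 1) * ∑ ij ∈ antidiagonal n, x ^ ij.1 * t ^ ij.2 := by
  rw [divDiff]
  split_ifs with h
  · subst h
    rw [Polynomial.eval_derivative_eq_sum]
    refine sum_congr rfl fun n _ => ?_
    rw [sum_congr rfl fun ij hij => by rw [← pow_add, mem_antidiagonal.1 hij], sum_const,
      Nat.card_antidiagonal, nsmul_eq_mul]
    push_cast
    ring
  · rw [div_eq_iff (sub_ne_zero.2 h), Polynomial.eval_sub_eval_eq_sum]

section DoubleIntegral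

variable {σ τ : ℝ}

lemma integral_divDiff_mul_semicircle (Q : Polynomial ℝ) (x : ℝ) :
    ∫ t in σ..τ, divDiff Q x t * semicircle σ τ t =
      ∑ n ∈ range (Q.derivative.natDegree + 1), Q.derivative.coeff (n + 1) *
        ∑ ij ∈ antidiagonal n, x ^ ij.1 * semicircleMoment σ τ ij.2 := by
  simp_rw [divDiff_eq_sum, sum_mul, mul_assoc, sum_mul]
  rw [intervalIntegral.integral_finsetSum fun n _ =>
    (by fun_prop : Continuous _).intervalIntegrable _ _]
  refine sum_congr rfl fun n _ => ?_
  rw [intervalIntegral.integral_const_mul, intervalIntegral.integral_finsetSum fun n _ =>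
    (by fun_prop : Continuous _).intervalIntegrable _ _]
  simp only [mul_assoc, intervalIntegral.integral_const_mul]
  rfl

lemma continuous_integral_divDiff_mul_semicircle (Q : Polynomial ℝ) :
    Continuous fun x => ∫ t in σ..τ, divDiff Q x t * semicircle σ τ t := by
  simp_rw [integral_divDiff_mul_semicircle]
  fun_prop

lemma sum_antidiagonal_arcsineMoment_mul_semicircleMoment (hστ : σ < τ) (n : ℕ) :
    ∑ ij ∈ antidiagonal n, arcsineMoment σ τ ij.1 * semicircleMoment σ τ ij.2 =
      (n + 1) * π * semicircleMoment σ τ n := by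
  rw [sum_antidiagonal_mul_eq_of_moment_relations (arcsineMoment_one hστ)
    (succ_mul_semicircleMoment hστ) (p := σ * τ)
    (fun n => by rw [semicircleMoment_eq hστ]; ring), arcsineMoment_zero hστ]

lemma integral_integral_divDiff_mul_semicircle (hστ : σ < τ) (Q : Polynomial ℝ) :
    ∫ x in σ..τ, (∫ t in σ..τ, divDiff Q x t * semicircle σ τ t) / semicircle σ τ x =
      π * ∫ t in σ..τ, Q.derivative.derivative.eval t * semicircle σ τ t := by
  have hlhs :
      ∫ x in σ..τ, (∫ t in σ..τ, divDiff Q x t * semicircle σ τ t) / semicircle σ τ x =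
        ∑ n ∈ range (Q.derivative.natDegree + 1), Q.derivative.coeff (n + 1) *
          ∑ ij ∈ antidiagonal n, arcsineMoment σ τ ij.1 * semicircleMoment σ τ ij.2 := by
    simp_rw [integral_divDiff_mul_semicircle, sum_div]
    rw [intervalIntegral.integral_finsetSum fun n _ =>
      intervalIntegrable_div_semicircle hστ (by fun_prop)]
    refine sum_congr rfl fun n _ => ?_
    simp_rw [mul_div_assoc, sum_div]
    rw [intervalIntegral.integral_const_mul, intervalIntegral.integral_finsetSum fun ij _ =>
      intervalIntegrable_div_semicircle hστ (by fun_prop)]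
    simp_rw [mul_div_right_comm, intervalIntegral.integral_mul_const]
    rfl
  have hrhs : ∫ t in σ..τ, Q.derivative.derivative.eval t * semicircle σ τ t =
      ∑ n ∈ range (Q.derivative.natDegree + 1),
        Q.derivative.coeff (n + 1) * ((n + 1) * semicircleMoment σ τ n) := by
    simp_rw [Polynomial.eval_derivative_eq_sum, sum_mul]
    rw [intervalIntegral.integral_finsetSum fun n _ =>
      (by fun_prop : Continuous _).intervalIntegrable _ _]
    refine sum_congr rfl fun n _ => ?_
    simp_rw [mul_assoc, intervalIntegral.integral_const_mul]
    rfl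
  rw [hlhs, hrhs, mul_sum]
  refine sum_congr rfl fun n _ => ?_
  rw [sum_antidiagonal_arcsineMoment_mul_semicircleMoment hστ]
  ring

end DoubleIntegral

/-- The density `h(x) = (1/π)·r(x)/√((x−σ)(τ−x))` on `[σ,τ]` has total mass `1`. -/
theorem rFun_density_mass_one (Q : Polynomial ℝ) (σ τ : ℝ) (hστ : σ < τ) :
    (1 / Real.pi) * (∫ x in σ..τ, rFun Q σ τ x / Real.sqrt ((x - σ) * (τ - x))) = 1 := by
  have hF := continuous_integral_divDiff_mul_semicircle (σ := σ) (τ := τ) Q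
  have hsplit : ∀ x, rFun Q σ τ x / √((x - σ) * (τ - x)) =
      1 / (2 * π) * ((∫ t in σ..τ, divDiff Q x t * semicircle σ τ t) / semicircle σ τ x)
        - 1 / 2 * (Q.derivative.eval x * (x - (σ + τ) / 2) / semicircle σ τ x)
        + 1 / semicircle σ τ x := fun x => by
    simp only [rFun, ← semicircle.eq_def]
    ring
  have hint₁ := (intervalIntegrable_div_semicircle hστ hF).const_mul (1 / (2 * π))
  have hint₂ := (intervalIntegrable_div_semicircle hστ (f := fun x =>
    Q.derivative.eval x * (x - (σ + τ) / 2)) (by fun_prop)).const_mul (1 / 2)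
  simp_rw [hsplit]
  rw [intervalIntegral.integral_add (hint₁.sub hint₂) (intervalIntegrable_inv_semicircle hστ),
    intervalIntegral.integral_sub hint₁ hint₂, intervalIntegral.integral_const_mul,
    intervalIntegral.integral_const_mul, integral_integral_divDiff_mul_semicircle hστ,
    ← integral_deriv_mul_semicircle hστ (fun x => Q.derivative.hasDerivAt x) (by fun_prop),
    integral_inv_semicircle hστ]
  field_simp
  ring
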